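/- For any E-linear code C of length 2n, the two-sided symplectic double dual recovers the code: (C^{⊥_S})^{⊥_S} = C. -/

import Mathlib

open Finset

/-- The non-unital ring `E`, realized as pairs `(u, v) ∈ F₂ × F₂`
representing `uκ + vζ`. -/
def Ering : Type := (ZMod 2) × (ZMod 2)

namespace Ering

instance : AddCommGroup Ering := inferInstanceAs (AddCommGroup ((ZMod 2) × (ZMod 2)))
instance : DecidableEq Ering := inferInstanceAs (DecidableEq ((ZMod 2) × (ZMod 2)))
instance : Fintype Ering := inferInstanceAs (Fintype ((ZMod 2) × (ZMod 2)))

instance : Mul Ering := ⟨fun a b => (a.1 * b.1, a.2 * b.1)⟩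

instance : NonUnitalRing Ering :=
  { (inferInstance : AddCommGroup Ering), (inferInstance : Mul Ering) with
    left_distrib := by decide
    right_distrib := by decide
    zero_mul := by decide
    mul_zero := by decide
    mul_assoc := by decide }

/-- The generator κ. -/
def kappa : Ering := ((1 : ZMod 2), (0 : ZMod 2))
/-- The generator τ. -/
def tau : Ering := ((1 : ZMod 2), (1 : ZMod 2))
/-- ζ = κ + τ. -/
def zeta : Ering := ((0 : ZMod 2), (1 : ZMod 2))

/-- The scalar action of `F₂` on `E`: `u • e = e` if `u = 1`, else `0`. -/
def fsmul (u : ZMod 2) (e : Ering) : Ering := if u = 1 then e else 0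

/-- `E`-vectors of length `2n`, written as a pair `(u | v)` of halves of length `n`. -/
abbrev VE (n : ℕ) := (Fin n → Ering) × (Fin n → Ering)

/-- `F₂`-vectors of length `2n`, written as a pair of halves of length `n`. -/
abbrev VF (n : ℕ) := (Fin n → ZMod 2) × (Fin n → ZMod 2)

/-- Symplectic inner product on `E^{2n}`: `⟨(u|v),(u'|v')⟩ₛ = ⟨u,v'⟩ + ⟨v,u'⟩`. -/
def sympE {n : ℕ} (x y : VE n) : Ering := ∑ i, x.1 i * y.2 i + ∑ i, x.2 i * y.1 i

/-- Symplectic inner product on `F₂^{2n}`. -/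
def sympF {n : ℕ} (x y : VF n) : ZMod 2 := ∑ i, x.1 i * y.2 i + ∑ i, x.2 i * y.1 i

/-- An `E`-linear code: a left `E`-submodule of `E^{2n}`. -/
def IsLinearCode {n : ℕ} (C : Set (VE n)) : Prop :=
  (0 : VE n) ∈ C ∧ (∀ x ∈ C, ∀ y ∈ C, x + y ∈ C) ∧
    (∀ e : Ering, ∀ x ∈ C, ((fun i => e * x.1 i, fun i => e * x.2 i) : VE n) ∈ C)

/-- Componentwise reduction `π : E^{2n} → F₂^{2n}`, `π(uκ + vζ) = u`. -/
def resVec {n : ℕ} (x : VE n) : VF n := (fun i => (x.1 i).1, fun i => (x.2 i).1)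

/-- For `e ∈ E` and `v ∈ F₂^{2n}`, the vector `ev ∈ E^{2n}` with entries `vᵢ • e`. -/
def evec {n : ℕ} (e : Ering) (v : VF n) : VE n :=
  (fun i => fsmul (v.1 i) e, fun i => fsmul (v.2 i) e)

/-- The residue code `C_Res = π(C)`. -/
def resCode {n : ℕ} (C : Set (VE n)) : Set (VF n) := resVec '' C

/-- The torsion code `C_Tor = {v : ζv ∈ C}`. -/
def torCode {n : ℕ} (C : Set (VE n)) : Set (VF n) := {v | evec zeta v ∈ C}

/-- The left symplectic dual. -/
def leftDual {n : ℕ} (C : Set (VE n)) : Set (VE n) := {z | ∀ w ∈ C, sympE z w = 0}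

/-- The right symplectic dual. -/
def rightDual {n : ℕ} (C : Set (VE n)) : Set (VE n) := {z | ∀ w ∈ C, sympE w z = 0}

/-- The two-sided symplectic dual. -/
def dual {n : ℕ} (C : Set (VE n)) : Set (VE n) := leftDual C ∩ rightDual C

/-- The binary symplectic dual of `D ⊆ F₂^{2n}`. -/
def dualF {n : ℕ} (D : Set (VF n)) : Set (VF n) := {z | ∀ w ∈ D, sympF z w = 0}

/-- The two-sided symplectic hull. -/
def SHull {n : ℕ} (C : Set (VE n)) : Set (VE n) := C ∩ dual C

/-- The left symplectic hull. -/
def LSHull {n : ℕ} (C : Set (VE n)) : Set (VE n) := C ∩ leftDual C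

/-- The right symplectic hull. -/
def RSHull {n : ℕ} (C : Set (VE n)) : Set (VE n) := C ∩ rightDual C

/-- Symplectic hull of a binary code. -/
def SHullF {n : ℕ} (D : Set (VF n)) : Set (VF n) := D ∩ dualF D

/-- A free `E`-linear code: residue and torsion codes coincide. -/
def IsFree {n : ℕ} (C : Set (VE n)) : Prop := resCode C = torCode C

end Ering

/-!
Write `x ∈ E^{2n}` as `x = κ π(x) + ζ σ(x)` with binary vectors `π(x) = resVec x` and
`σ(x) = sndVec x`. Because `a b` only depends on the `κ`-coordinate of `b`, the `E`-valued form is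
`⟨z, w⟩ₛ = ⟨π z, π w⟩ κ + ⟨σ z, π w⟩ ζ`. For a linear code `C`, with `π(C) ⊆ C_Tor` and
`σ(C) ⊆ C_Tor`, this turns `z ∈ C^{⊥_S}` into `π z ⊥ C_Tor` and `σ z ⊥ C_Res`; so
`(C^{⊥_S})_Res = C_Tor^⊥` and `(C^{⊥_S})_Tor = C_Res^⊥`. A linear code is determined by its residue
and torsion codes (`z ∈ C ↔ π z ∈ C_Res ∧ σ z ∈ C_Tor`), and the binary symplectic form is
nondegenerate, so binary double duality gives `(C^{⊥_S})^{⊥_S} = C`.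
-/

namespace Ering

open Matrix

variable {n : ℕ}

/-- The `ζ`-coordinates of a vector, complementing `resVec`: `x = κ (resVec x) + ζ (sndVec x)`. -/
def sndVec (x : VE n) : VF n := (fun i => (x.1 i).2, fun i => (x.2 i).2)

lemma sympF_comm (x y : VF n) : sympF x y = sympF y x := by
  simp only [sympF, mul_comm (x.1 _), mul_comm (x.2 _)]
  exact add_comm _ _

def sympBilin (n : ℕ) : LinearMap.BilinForm (ZMod 2) (VF n) :=
  (dotProductBilin (ZMod 2) (ZMod 2)).compl₁₂ (LinearMap.fst _ _ _) (LinearMap.snd _ _ _) +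
    (dotProductBilin (ZMod 2) (ZMod 2)).compl₁₂ (LinearMap.snd _ _ _) (LinearMap.fst _ _ _)

lemma sympBilin_apply (x y : VF n) : sympBilin n x y = sympF x y := rfl

lemma sympF_smul_right (c : ZMod 2) (x y : VF n) : sympF x (c • y) = c * sympF x y := by
  simp only [← sympBilin_apply, map_smul, smul_eq_mul]

lemma sympBilin_isRefl : (sympBilin n).IsRefl := fun x y h => by
  rwa [sympBilin_apply, sympF_comm, ← sympBilin_apply]

lemma sympBilin_nondegenerate : (sympBilin n).Nondegenerate := by
  refine (LinearMap.IsRefl.nondegenerate_iff_separatingLeft sympBilin_isRefl).2 fun x hx => ?_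
  have h₁ : x.1 = 0 := dotProduct_eq_zero_iff.1 fun w => by
    simpa [sympBilin_apply, sympF, dotProduct] using hx (0, w)
  have h₂ : x.2 = 0 := dotProduct_eq_zero_iff.1 fun w => by
    simpa [sympBilin_apply, sympF, dotProduct, h₁] using hx (w, 0)
  exact Prod.ext h₁ h₂

lemma dualF_coe_submodule (M : Submodule (ZMod 2) (VF n)) :
    dualF (M : Set (VF n)) = (sympBilin n).orthogonal M := by
  ext z
  exact forall₂_congr fun w _ => by rw [sympF_comm, ← sympBilin_apply]

lemma dualF_dualF {D : Set (VF n)} (h₀ : (0 : VF n) ∈ D)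
    (hadd : ∀ x ∈ D, ∀ y ∈ D, x + y ∈ D) : dualF (dualF D) = D := by
  let M : Submodule (ZMod 2) (VF n) :=
    { carrier := D
      zero_mem' := h₀
      add_mem' := fun hx hy => hadd _ hx _ hy
      smul_mem' := fun c x hx => by
        obtain rfl | rfl : c = 0 ∨ c = 1 := by decide +revert
        exacts [(zero_smul (ZMod 2) x).symm ▸ h₀, (one_smul (ZMod 2) x).symm ▸ hx] }
  change dualF (dualF (M : Set (VF n))) = M
  rw [dualF_coe_submodule, dualF_coe_submodule,
    LinearMap.BilinForm.orthogonal_orthogonal sympBilin_nondegenerate sympBilin_isRefl]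

/- `Ering` is a `def`, so the `Prod` lemmas about sums do not apply to it; going through
these additive maps lets `map_sum` do the work. -/
def fstHom : Ering →+ ZMod 2 := AddMonoidHom.fst (ZMod 2) (ZMod 2)

def sndHom : Ering →+ ZMod 2 := AddMonoidHom.snd (ZMod 2) (ZMod 2)

lemma sympE_fst (z w : VE n) : (sympE z w).1 = sympF (resVec z) (resVec w) := by
  change fstHom (∑ i, z.1 i * w.2 i + ∑ i, z.2 i * w.1 i) = _
  rw [map_add, map_sum, map_sum]
  rfl

lemma sympE_snd (z w : VE n) : (sympE z w).2 = sympF (sndVec z) (resVec w) := by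
  change sndHom (∑ i, z.1 i * w.2 i + ∑ i, z.2 i * w.1 i) = _
  rw [map_add, map_sum, map_sum]
  rfl

lemma sympE_eq_zero_iff (z w : VE n) :
    sympE z w = 0 ↔ sympF (resVec z) (resVec w) = 0 ∧ sympF (sndVec z) (resVec w) = 0 := by
  rw [← sympE_fst, ← sympE_snd]
  exact Prod.ext_iff

lemma sympE_add_left (x y w : VE n) : sympE (x + y) w = sympE x w + sympE y w := by
  simp only [sympE, Prod.fst_add, Prod.snd_add, Pi.add_apply, add_mul, sum_add_distrib]
  abel

lemma sympE_add_right (w x y : VE n) : sympE w (x + y) = sympE w x + sympE w y := by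
  simp only [sympE, Prod.fst_add, Prod.snd_add, Pi.add_apply, mul_add, sum_add_distrib]
  abel

lemma sympE_smul_left (e : Ering) (x w : VE n) : sympE (e • x) w = e * sympE x w := by
  simp only [sympE, Prod.smul_fst, Prod.smul_snd, Pi.smul_apply, smul_eq_mul, mul_assoc,
    mul_sum, mul_add]

lemma resVec_smul (e : Ering) (x : VE n) : resVec (e • x) = e.1 • resVec x := rfl

/-- Only the residue of the right argument enters `sympE`, and it is scaled by `e.1`. -/
lemma sympE_smul_right_eq_zero {w x : VE n} (e : Ering) (h : sympE w x = 0) :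
    sympE w (e • x) = 0 := by
  rw [sympE_eq_zero_iff] at h ⊢
  rw [resVec_smul, sympF_smul_right, sympF_smul_right, h.1, h.2, mul_zero]
  exact ⟨rfl, rfl⟩

lemma resVec_evec_kappa (u : VF n) : resVec (evec kappa u) = u := by
  have h : ∀ c : ZMod 2, (fsmul c kappa).1 = c := by decide
  exact Prod.ext (funext fun _ => h _) (funext fun _ => h _)

lemma sndVec_evec_kappa (u : VF n) : sndVec (evec kappa u) = 0 := by
  have h : ∀ c : ZMod 2, (fsmul c kappa).2 = 0 := by decide
  exact Prod.ext (funext fun _ => h _) (funext fun _ => h _)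

lemma resVec_evec_zeta (v : VF n) : resVec (evec zeta v) = 0 := by
  have h : ∀ c : ZMod 2, (fsmul c zeta).1 = 0 := by decide
  exact Prod.ext (funext fun _ => h _) (funext fun _ => h _)

lemma sndVec_evec_zeta (v : VF n) : sndVec (evec zeta v) = v := by
  have h : ∀ c : ZMod 2, (fsmul c zeta).2 = c := by decide
  exact Prod.ext (funext fun _ => h _) (funext fun _ => h _)

lemma evec_zeta_zero : evec zeta (0 : VF n) = 0 := by
  have h : fsmul 0 zeta = 0 := by decide
  exact Prod.ext (funext fun _ => h) (funext fun _ => h)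

lemma evec_zeta_add (u v : VF n) : evec zeta (u + v) = evec zeta u + evec zeta v := by
  have h : ∀ c d : ZMod 2, fsmul (c + d) zeta = fsmul c zeta + fsmul d zeta := by decide
  exact Prod.ext (funext fun _ => h _ _) (funext fun _ => h _ _)

lemma zeta_smul (x : VE n) : zeta • x = evec zeta (resVec x) := by
  have h : ∀ a : Ering, zeta * a = fsmul a.1 zeta := by decide
  exact Prod.ext (funext fun _ => h _) (funext fun _ => h _)

lemma kappa_smul (x : VE n) : kappa • x = evec kappa (resVec x) := by
  have h : ∀ a : Ering, kappa * a = fsmul a.1 kappa := by decide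
  exact Prod.ext (funext fun _ => h _) (funext fun _ => h _)

lemma add_kappa_smul (x : VE n) : x + kappa • x = evec zeta (sndVec x) := by
  have h : ∀ a : Ering, a + kappa * a = fsmul a.2 zeta := by decide
  exact Prod.ext (funext fun _ => h _) (funext fun _ => h _)

lemma kappa_smul_add_evec_zeta (x : VE n) : kappa • x + evec zeta (sndVec x) = x := by
  have h : ∀ a : Ering, kappa * a + fsmul a.2 zeta = a := by decide
  exact Prod.ext (funext fun _ => h _) (funext fun _ => h _)

section Codes

variable {C : Set (VE n)}

lemma IsLinearCode.zero_mem (hC : IsLinearCode C) : 0 ∈ C := hC.1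

lemma IsLinearCode.add_mem (hC : IsLinearCode C) {x y : VE n} (hx : x ∈ C) (hy : y ∈ C) :
    x + y ∈ C :=
  hC.2.1 x hx y hy

lemma IsLinearCode.smul_mem (hC : IsLinearCode C) (e : Ering) {x : VE n} (hx : x ∈ C) :
    e • x ∈ C :=
  hC.2.2 e x hx

lemma IsLinearCode.inter {C' : Set (VE n)} (hC : IsLinearCode C) (hC' : IsLinearCode C') :
    IsLinearCode (C ∩ C') :=
  ⟨⟨hC.zero_mem, hC'.zero_mem⟩, fun _ hx _ hy => ⟨hC.add_mem hx.1 hy.1, hC'.add_mem hx.2 hy.2⟩,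
    fun e _ hx => ⟨hC.smul_mem e hx.1, hC'.smul_mem e hx.2⟩⟩

lemma isLinearCode_leftDual (S : Set (VE n)) : IsLinearCode (leftDual S) := by
  refine ⟨fun w _ => ?_, fun x hx y hy w hw => ?_,
    fun e x hx w hw => show sympE (e • x) w = 0 from ?_⟩
  · simp [sympE]
  · rw [sympE_add_left, hx w hw, hy w hw, add_zero]
  · rw [sympE_smul_left, hx w hw, mul_zero]

lemma isLinearCode_rightDual (S : Set (VE n)) : IsLinearCode (rightDual S) := by
  refine ⟨fun w _ => ?_, fun x hx y hy w hw => ?_, fun e x hx w hw => ?_⟩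
  · simp [sympE]
  · rw [sympE_add_right, hx w hw, hy w hw, add_zero]
  · exact sympE_smul_right_eq_zero e (hx w hw)

lemma isLinearCode_dual (S : Set (VE n)) : IsLinearCode (dual S) :=
  (isLinearCode_leftDual S).inter (isLinearCode_rightDual S)

lemma IsLinearCode.resVec_mem_torCode (hC : IsLinearCode C) {x : VE n} (hx : x ∈ C) :
    resVec x ∈ torCode C := by
  change evec zeta (resVec x) ∈ C
  rw [← zeta_smul]
  exact hC.smul_mem zeta hx

lemma IsLinearCode.sndVec_mem_torCode (hC : IsLinearCode C) {x : VE n} (hx : x ∈ C) :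
    sndVec x ∈ torCode C := by
  change evec zeta (sndVec x) ∈ C
  rw [← add_kappa_smul]
  exact hC.add_mem hx (hC.smul_mem kappa hx)

lemma IsLinearCode.mem_iff (hC : IsLinearCode C) (z : VE n) :
    z ∈ C ↔ resVec z ∈ resCode C ∧ sndVec z ∈ torCode C := by
  refine ⟨fun hz => ⟨⟨z, hz, rfl⟩, hC.sndVec_mem_torCode hz⟩, ?_⟩
  rintro ⟨⟨w, hw, hwz⟩, hz⟩
  rw [← kappa_smul_add_evec_zeta z, kappa_smul, ← hwz, ← kappa_smul]
  exact hC.add_mem (hC.smul_mem kappa hw) hz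

lemma IsLinearCode.dualF_dualF_resCode (hC : IsLinearCode C) :
    dualF (dualF (resCode C)) = resCode C :=
  dualF_dualF ⟨0, hC.zero_mem, rfl⟩ fun _ ⟨x, hx, hxu⟩ _ ⟨y, hy, hyv⟩ =>
    ⟨x + y, hC.add_mem hx hy, hxu ▸ hyv ▸ rfl⟩

lemma IsLinearCode.dualF_dualF_torCode (hC : IsLinearCode C) :
    dualF (dualF (torCode C)) = torCode C := by
  refine dualF_dualF ?_ fun u hu v hv => ?_
  · simpa [torCode, evec_zeta_zero] using hC.zero_mem
  · simpa [torCode, evec_zeta_add] using hC.add_mem hu hv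

lemma IsLinearCode.mem_dual_iff (hC : IsLinearCode C) (z : VE n) :
    z ∈ dual C ↔ resVec z ∈ dualF (torCode C) ∧ sndVec z ∈ dualF (resCode C) := by
  simp only [dual, leftDual, rightDual, Set.mem_inter_iff, Set.mem_ofPred_eq, sympE_eq_zero_iff]
  constructor
  · rintro ⟨hl, hr⟩
    refine ⟨fun v hv => ?_, fun _ ⟨w, hw, hwv⟩ => hwv ▸ (hl w hw).2⟩
    simpa [sndVec_evec_zeta, sympF_comm] using (hr _ hv).2
  · rintro ⟨hres, hsnd⟩
    refine ⟨fun w hw => ⟨hres _ (hC.resVec_mem_torCode hw), hsnd _ ⟨w, hw, rfl⟩⟩,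
      fun w hw => ⟨?_, ?_⟩⟩
    · rw [sympF_comm]
      exact hres _ (hC.resVec_mem_torCode hw)
    · rw [sympF_comm]
      exact hres _ (hC.sndVec_mem_torCode hw)

lemma IsLinearCode.resCode_dual (hC : IsLinearCode C) :
    resCode (dual C) = dualF (torCode C) := by
  ext u
  refine ⟨fun ⟨z, hz, hzu⟩ => hzu ▸ ((hC.mem_dual_iff z).1 hz).1, fun hu => ?_⟩
  refine ⟨evec kappa u, (hC.mem_dual_iff _).2 ⟨?_, ?_⟩, resVec_evec_kappa u⟩
  · rwa [resVec_evec_kappa]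
  · simp [sndVec_evec_kappa, dualF, sympF]

lemma IsLinearCode.torCode_dual (hC : IsLinearCode C) :
    torCode (dual C) = dualF (resCode C) := by
  ext v
  change evec zeta v ∈ dual C ↔ _
  rw [hC.mem_dual_iff, resVec_evec_zeta, sndVec_evec_zeta]
  simp [dualF, sympF]

end Codes

end Ering

open Ering
/-- the two-sided symplectic double dual recovers the code. -/
theorem Ering.dual_dual {n : ℕ} (C : Set (VE n)) (hC : IsLinearCode C) :
    dual (dual C) = C := by
  ext z
  rw [(isLinearCode_dual C).mem_dual_iff, hC.torCode_dual, hC.resCode_dual,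
    hC.dualF_dualF_resCode, hC.dualF_dualF_torCode, hC.mem_iff]
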